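/- The Rogers–Szegő polynomials satisfy, for every nonnegative integer $n$ and indeterminate $t$: $H_n(t) = \sum_{r=0}^{\lfloor n/2 \rfloor} t^{2r}\, (-q/t;q^2)_r\, (-t;q^2)_{\lfloor (n+1)/2 \rfloor - r}\, \binom{\lfloor n/2 \rfloor}{r}_{q^2}$, where $H_n(t) = \sum_{j=0}^{n} t^j \binom{n}{j}_q$, as an identity of Laurent polynomials in $t$ with coefficients rational in $q$ (equivalently, after clearing the factor $t^{-r}$ occurring in $(-q/t;q^2)_r\, t^{2r} = t^r\prod_{i=0}^{r-1}(t+q^{2i+1})$, an identity of polynomials in $t$ and $q$). -/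
import Mathlib


/- The new representation (8.1) of the Rogers–Szegő polynomials
`H_n(t) = ∑_j t^j [n,j]_q`:
`H_n(t) = ∑_{r=0}^{⌊n/2⌋} t^{2r} (-q/t;q²)_r (-t;q²)_{⌊(n+1)/2⌋-r} [⌊n/2⌋, r]_{q²}`,
an identity in the two-variable rational function field
`RatFunc (RatFunc ℚ)` with `q = C X` and `t = X`. -/

open Finset

noncomputable section

def qPoch {F : Type*} [Field F] (a x : F) (n : ℕ) : F :=
  ∏ i ∈ Finset.range n, (1 - a * x ^ i)

def qBinom {F : Type*} [Field F] (x : F) (n k : ℤ) : F :=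
  if 0 ≤ k ∧ k ≤ n then
    qPoch x x n.toNat / (qPoch x x k.toNat * qPoch x x (n - k).toNat)
  else 0

abbrev F2 : Type := RatFunc (RatFunc ℚ)

def q : F2 := RatFunc.C RatFunc.X
def t : F2 := RatFunc.X

/-- The Rogers–Szegő polynomial `H_n(t) = ∑_{j=0}^n t^j [n,j]_q`. -/
def rogersSzego (n : ℕ) : F2 :=
  ∑ j ∈ Finset.range (n + 1), t ^ j * qBinom q (n : ℤ) (j : ℤ)

section General
variable {F : Type*} [Field F]

lemma qPoch_zero (a x : F) : qPoch a x 0 = 1 := by simp [qPoch]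

lemma qPoch_succ (a x : F) (n : ℕ) :
    qPoch a x (n + 1) = qPoch a x n * (1 - a * x ^ n) :=
  Finset.prod_range_succ _ _

lemma qBinom_of_neg (x : F) (n k : ℤ) (h : ¬ (0 ≤ k ∧ k ≤ n)) : qBinom x n k = 0 := by
  simp [qBinom, h]

variable (x : F) (hx : ∀ i : ℕ, 1 ≤ i → (1 : F) - x ^ i ≠ 0)
include hx

lemma qPoch_ne_zero (n : ℕ) : qPoch x x n ≠ 0 := by
  rw [qPoch]
  apply Finset.prod_ne_zero_iff.mpr
  intro i _
  have := hx (i + 1) (by omega)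
  rwa [pow_succ'] at this

lemma qBinom_nat (n k : ℕ) (h : k ≤ n) :
    qBinom x (n : ℤ) (k : ℤ) = qPoch x x n / (qPoch x x k * qPoch x x (n - k)) := by
  rw [qBinom, if_pos (by exact ⟨Int.ofNat_nonneg k, by exact_mod_cast h⟩)]
  have h1 : ((n : ℤ)).toNat = n := by omega
  have h2 : ((k : ℤ)).toNat = k := by omega
  have h3 : ((n : ℤ) - (k : ℤ)).toNat = n - k := by omega
  rw [h1, h2, h3]

end General

section General2
variable {F : Type*} [Field F] (x : F) (hx : ∀ i : ℕ, 1 ≤ i → (1 : F) - x ^ i ≠ 0)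
include hx

lemma factor_ne_zero (j : ℕ) : (1 : F) - x * x ^ j ≠ 0 := by
  have := hx (j + 1) (by omega)
  rwa [pow_succ'] at this

lemma qBinom_zero (n : ℕ) : qBinom x (n : ℤ) 0 = 1 := by
  have : ((0:ℕ) : ℤ) = (0 : ℤ) := rfl
  rw [← this, qBinom_nat x hx n 0 (Nat.zero_le n)]
  rw [qPoch_zero, Nat.sub_zero, one_mul, div_self (qPoch_ne_zero x hx n)]

lemma qBinom_self (n : ℕ) : qBinom x (n : ℤ) (n : ℤ) = 1 := by
  rw [qBinom_nat x hx n n le_rfl, Nat.sub_self, qPoch_zero, mul_one,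
    div_self (qPoch_ne_zero x hx n)]

lemma pascal_nat (n r : ℕ) (h : r ≤ n + 1) :
    qBinom x ((n:ℤ) + 1) (r : ℤ)
      = qBinom x (n : ℤ) (r : ℤ) + x ^ (n + 1 - r) * qBinom x (n : ℤ) ((r : ℤ) - 1) := by
  rcases Nat.eq_zero_or_pos r with rfl | hr
  · rw [qBinom_of_neg x (n:ℤ) (((0:ℕ):ℤ) - 1) (by omega)]
    push_cast
    rw [show (n:ℤ) + 1 = ((n+1 : ℕ) : ℤ) by push_cast; ring]
    rw [qBinom_zero x hx, qBinom_zero x hx]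
    ring
  · obtain ⟨k, rfl⟩ : ∃ k, r = k + 1 := ⟨r - 1, by omega⟩
    rcases Nat.lt_or_ge n (k + 1) with hn | hn
    · -- r = n + 1 case
      obtain rfl : n = k := by omega
      have e1 : ((n + 1 : ℕ) : ℤ) = (n : ℤ) + 1 := by push_cast; ring
      rw [e1, show (n:ℤ) + 1 - 1 = ((n:ℕ):ℤ) by ring,
        show (n:ℤ) + 1 = ((n+1:ℕ):ℤ) by push_cast; ring,
        qBinom_self x hx, qBinom_self x hx,
        qBinom_of_neg x ((n:ℕ):ℤ) ((n+1:ℕ):ℤ) (by push_cast; omega)]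
      simp
    · obtain ⟨s, rfl⟩ : ∃ s, n = s + k + 1 := ⟨n - k - 1, by omega⟩
      rw [show ((s+k+1:ℕ):ℤ) + 1 = ((s+k+2:ℕ):ℤ) by push_cast; ring,
        show ((k+1:ℕ):ℤ) - 1 = ((k:ℕ):ℤ) by push_cast; ring,
        qBinom_nat x hx (s+k+2) (k+1) (by omega),
        qBinom_nat x hx (s+k+1) (k+1) (by omega),
        qBinom_nat x hx (s+k+1) k (by omega),
        show s+k+2-(k+1) = s+1 by omega,
        show s+k+1-(k+1) = s by omega,
        show s+k+1-k = s+1 by omega,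
        show s+k+2 = (s+k+1)+1 by omega]
      simp only [qPoch_succ]
      have h1 := qPoch_ne_zero x hx (s+k+1)
      have h2 := qPoch_ne_zero x hx k
      have h3 := qPoch_ne_zero x hx s
      have f1 := factor_ne_zero x hx k
      have f2 := factor_ne_zero x hx s
      field_simp
      ring

lemma top_nat (n r : ℕ) (h : r ≤ n + 1) :
    qBinom x ((n:ℤ) + 1) (r : ℤ) * (1 - x ^ (n + 1 - r))
      = (1 - x * x ^ n) * qBinom x (n : ℤ) (r : ℤ) := by
  rcases Nat.lt_or_ge n r with hn | hn
  · -- r = n + 1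
    obtain rfl : r = n + 1 := by omega
    rw [Nat.sub_self, pow_zero, sub_self, mul_zero,
      qBinom_of_neg x ((n:ℕ):ℤ) ((n+1:ℕ):ℤ) (by push_cast; omega), mul_zero]
  · obtain ⟨s, rfl⟩ : ∃ s, n = s + r := ⟨n - r, by omega⟩
    rw [show ((s+r:ℕ):ℤ) + 1 = ((s+r+1:ℕ):ℤ) by push_cast; ring,
      qBinom_nat x hx (s+r+1) r (by omega),
      qBinom_nat x hx (s+r) r (by omega),
      show s+r+1-r = s+1 by omega,
      show s+r-r = s by omega]
    simp only [qPoch_succ]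
    have h1 := qPoch_ne_zero x hx (s+r)
    have h2 := qPoch_ne_zero x hx r
    have h3 := qPoch_ne_zero x hx s
    have f1 := factor_ne_zero x hx s
    have f2 := factor_ne_zero x hx (s+r)
    field_simp
    ring

lemma three_term (n j : ℕ) :
    qBinom x ((n:ℤ) + 2) (j : ℤ)
      = qBinom x ((n:ℤ) + 1) (j : ℤ) + qBinom x ((n:ℤ) + 1) ((j : ℤ) - 1)
        - (1 - x * x ^ n) * qBinom x (n : ℤ) ((j : ℤ) - 1) := by
  rcases Nat.lt_or_ge (n + 2) j with hj | hj
  · rw [qBinom_of_neg x ((n:ℤ)+2) (j:ℤ) (by omega),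
      qBinom_of_neg x ((n:ℤ)+1) (j:ℤ) (by omega),
      qBinom_of_neg x ((n:ℤ)+1) ((j:ℤ)-1) (by omega),
      qBinom_of_neg x ((n:ℤ)) ((j:ℤ)-1) (by omega)]
    ring
  rcases Nat.eq_zero_or_pos j with rfl | hjpos
  · rw [qBinom_of_neg x ((n:ℤ)+1) (((0:ℕ):ℤ)-1) (by omega),
      qBinom_of_neg x ((n:ℤ)) (((0:ℕ):ℤ)-1) (by omega)]
    rw [show ((n:ℤ)+2) = ((n+2:ℕ):ℤ) by push_cast; ring,
      show ((n:ℤ)+1) = ((n+1:ℕ):ℤ) by push_cast; ring, Nat.cast_zero,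
      qBinom_zero x hx, qBinom_zero x hx]
    ring
  obtain ⟨i, rfl⟩ : ∃ i, j = i + 1 := ⟨j - 1, by omega⟩
  have hcast : ((i+1:ℕ):ℤ) - 1 = ((i:ℕ):ℤ) := by push_cast; ring
  have hp := pascal_nat x hx (n+1) (i+1) (by omega)
  rw [show ((n+1:ℕ):ℤ) = (n:ℤ)+1 by push_cast; ring,
    show ((n:ℤ)+1) + 1 = (n:ℤ)+2 by ring, hcast] at hp
  have ht := top_nat x hx n i (by omega)
  rw [hp, hcast, show n+1+1-(i+1) = n+1-i by omega]
  linear_combination -ht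

end General2

section Specific
open Finset

lemma t_ne_zero : t ≠ 0 := RatFunc.X_ne_zero

lemma hq : ∀ i : ℕ, 1 ≤ i → (1 : F2) - q ^ i ≠ 0 := by
  intro i hi
  rw [q, ← map_pow, ← map_one (RatFunc.C (K := RatFunc ℚ)), ← map_sub]
  rw [map_ne_zero]
  have hX : (RatFunc.X : RatFunc ℚ) = algebraMap (Polynomial ℚ) _ Polynomial.X := rfl
  rw [hX, ← map_pow, ← map_one (algebraMap (Polynomial ℚ) (RatFunc ℚ)), ← map_sub]
  apply RatFunc.algebraMap_ne_zero
  intro h0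
  have h1 := congrArg (fun p => Polynomial.coeff p i) h0
  simp [Polynomial.coeff_one, (show i ≠ 0 by omega)] at h1

lemma hq2 : ∀ i : ℕ, 1 ≤ i → (1 : F2) - (q ^ 2) ^ i ≠ 0 := by
  intro i hi
  rw [← pow_mul]
  exact hq (2 * i) (by omega)

lemma sum_shift (N : ℤ) (m : ℕ) :
    ∑ j ∈ range (m + 1), t ^ j * qBinom q N ((j : ℤ) - 1)
      = t * ∑ j ∈ range m, t ^ j * qBinom q N (j : ℤ) := by
  rw [Finset.sum_range_succ']
  rw [qBinom_of_neg q N (((0:ℕ):ℤ) - 1) (by omega)]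
  rw [Finset.mul_sum]
  simp only [mul_zero, add_zero]
  apply Finset.sum_congr rfl
  intro j _
  rw [show ((j + 1 : ℕ) : ℤ) - 1 = (j : ℤ) by push_cast; ring, pow_succ]
  ring

lemma rs_rec (n : ℕ) :
    rogersSzego (n + 2)
      = (1 + t) * rogersSzego (n + 1) - (1 - q * q ^ n) * (t * rogersSzego n) := by
  have step : rogersSzego (n + 2)
      = ∑ j ∈ range (n + 3),
          (t ^ j * qBinom q ((n:ℤ) + 1) (j : ℤ)
            + t ^ j * qBinom q ((n:ℤ) + 1) ((j : ℤ) - 1)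
            - (1 - q * q ^ n) * (t ^ j * qBinom q (n : ℤ) ((j : ℤ) - 1))) := by
    rw [rogersSzego, show n + 2 + 1 = n + 3 from rfl]
    apply Finset.sum_congr rfl
    intro j _
    rw [show ((n + 2 : ℕ) : ℤ) = (n : ℤ) + 2 by push_cast; ring,
      three_term q hq n j]
    ring
  rw [step]
  rw [Finset.sum_sub_distrib, Finset.sum_add_distrib]
  rw [show n + 3 = (n + 2) + 1 from rfl]
  rw [Finset.sum_range_succ (fun j => t ^ j * qBinom q ((n:ℤ) + 1) (j : ℤ)) (n + 2)]
  rw [qBinom_of_neg q ((n:ℤ) + 1) ((n + 2 : ℕ) : ℤ) (by push_cast; omega)]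
  rw [← Finset.mul_sum]
  rw [sum_shift ((n:ℤ) + 1) (n + 2), sum_shift ((n:ℤ)) (n + 2)]
  rw [show n + 2 = (n + 1) + 1 from rfl]
  rw [Finset.sum_range_succ (fun j => t ^ j * qBinom q ((n:ℤ)) (j : ℤ)) (n + 1)]
  rw [qBinom_of_neg q ((n:ℤ)) ((n + 1 : ℕ) : ℤ) (by push_cast; omega)]
  have e1 : rogersSzego (n + 1) = ∑ j ∈ range (n + 1 + 1), t ^ j * qBinom q ((n:ℤ) + 1) (j : ℤ) := by
    rw [rogersSzego]
    apply Finset.sum_congr rfl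
    intro j _
    rw [show ((n + 1 : ℕ) : ℤ) = (n : ℤ) + 1 by push_cast; ring]
  have e0 : rogersSzego n = ∑ j ∈ range (n + 1), t ^ j * qBinom q ((n:ℤ)) (j : ℤ) := rfl
  rw [← e1, ← e0]
  ring
def Se (m : ℕ) : F2 :=
  ∑ r ∈ range (m + 1),
    t ^ (2 * r) * qPoch (-(q / t)) (q ^ 2) r * qPoch (-t) (q ^ 2) (m - r) *
      qBinom (q ^ 2) (m : ℤ) (r : ℤ)

def So (m : ℕ) : F2 :=
  ∑ r ∈ range (m + 1),
    t ^ (2 * r) * qPoch (-(q / t)) (q ^ 2) r * qPoch (-t) (q ^ 2) (m + 1 - r) *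
      qBinom (q ^ 2) (m : ℤ) (r : ℤ)

lemma qB00 (x : F2) : qBinom x ((0:ℕ):ℤ) ((0:ℕ):ℤ) = 1 := by
  norm_num [qBinom, qPoch]

lemma rs0 : rogersSzego 0 = 1 := by
  rw [rogersSzego, Finset.sum_range_one, pow_zero, one_mul, qB00]

lemma rs1 : rogersSzego 1 = 1 + t := by
  rw [rogersSzego, Finset.sum_range_succ, Finset.sum_range_one]
  rw [show ((0:ℕ):ℤ) = (0:ℤ) from rfl, qBinom_zero q hq 1, qBinom_self q hq 1]
  ring

lemma Se0 : Se 0 = 1 := by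
  rw [Se, Finset.sum_range_one, qB00 (q^2)]
  norm_num [qPoch_zero]

lemma So0 : So 0 = 1 + t := by
  rw [So, Finset.sum_range_one, qB00 (q^2)]
  rw [show 0+1-0 = 0+1 from rfl, qPoch_succ]
  norm_num [qPoch_zero]

lemma step_odd (m : ℕ) :
    So (m + 1) = (1 + t) * Se (m + 1) - (1 - q * q ^ (2 * m + 1)) * (t * So m) := by
  have key : ∀ r ∈ range (m + 2),
      t ^ (2*r) * qPoch (-(q/t)) (q^2) r * qPoch (-t) (q^2) (m+1+1-r) * qBinom (q^2) ((m+1:ℕ):ℤ) (r:ℤ)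
      = (1 + t) * (t ^ (2*r) * qPoch (-(q/t)) (q^2) r * qPoch (-t) (q^2) (m+1-r) * qBinom (q^2) ((m+1:ℕ):ℤ) (r:ℤ))
        - (1 - q * q ^ (2*m+1)) * (t * (t ^ (2*r) * qPoch (-(q/t)) (q^2) r * qPoch (-t) (q^2) (m+1-r) * qBinom (q^2) ((m:ℕ):ℤ) (r:ℤ))) := by
    intro r hr
    rw [mem_range] at hr
    have hr' : r ≤ m + 1 := by omega
    rw [show m+1+1-r = (m+1-r)+1 by omega, qPoch_succ]
    have top := top_nat (q^2) hq2 m r hr'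
    rw [show ((m:ℤ)+1) = ((m+1:ℕ):ℤ) by push_cast; ring] at top
    linear_combination (-t * (t ^ (2*r) * qPoch (-(q/t)) (q^2) r) * qPoch (-t) (q^2) (m+1-r)) * top
  calc So (m + 1)
      = ∑ r ∈ range (m + 2),
          ((1 + t) * (t ^ (2*r) * qPoch (-(q/t)) (q^2) r * qPoch (-t) (q^2) (m+1-r) * qBinom (q^2) ((m+1:ℕ):ℤ) (r:ℤ))
            - (1 - q * q ^ (2*m+1)) * (t * (t ^ (2*r) * qPoch (-(q/t)) (q^2) r * qPoch (-t) (q^2) (m+1-r) * qBinom (q^2) ((m:ℕ):ℤ) (r:ℤ)))) :=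
        Finset.sum_congr rfl key
    _ = (1 + t) * Se (m + 1) - (1 - q * q ^ (2*m+1)) * (t * So m) := by
        rw [Finset.sum_sub_distrib, ← Finset.mul_sum, ← Finset.mul_sum, ← Finset.mul_sum]
        rw [Finset.sum_range_succ
          (fun r => t ^ (2*r) * qPoch (-(q/t)) (q^2) r * qPoch (-t) (q^2) (m+1-r) * qBinom (q^2) ((m:ℕ):ℤ) (r:ℤ)) (m+1)]
        rw [qBinom_of_neg (q^2) ((m:ℕ):ℤ) ((m+1:ℕ):ℤ) (by push_cast; omega)]
        rw [Se, So]
        ring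

lemma step_even (m : ℕ) :
    Se (m + 1) = (1 + t) * So m - (1 - q * q ^ (2 * m)) * (t * Se m) := by
  have key : ∀ r ∈ range (m + 2),
      t ^ (2*r) * qPoch (-(q/t)) (q^2) r * qPoch (-t) (q^2) (m+1-r) * qBinom (q^2) ((m+1:ℕ):ℤ) (r:ℤ)
      = t ^ (2*r) * qPoch (-(q/t)) (q^2) r * qPoch (-t) (q^2) (m+1-r) * qBinom (q^2) ((m:ℕ):ℤ) (r:ℤ)
        + (q^2) ^ (m+1-r) * (t ^ (2*r) * qPoch (-(q/t)) (q^2) r * qPoch (-t) (q^2) (m+1-r) * qBinom (q^2) ((m:ℕ):ℤ) ((r:ℤ)-1)) := by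
    intro r hr
    rw [mem_range] at hr
    have hp := pascal_nat (q^2) hq2 m r (by omega)
    rw [show ((m:ℤ)+1) = ((m+1:ℕ):ℤ) by push_cast; ring] at hp
    rw [hp]
    ring
  have key2 : ∀ r ∈ range (m + 1),
      (q^2) ^ (m+1-(r+1)) * (t ^ (2*(r+1)) * qPoch (-(q/t)) (q^2) (r+1) * qPoch (-t) (q^2) (m+1-(r+1)) * qBinom (q^2) ((m:ℕ):ℤ) (((r+1:ℕ):ℤ)-1))
      = t * (t ^ (2*r) * qPoch (-(q/t)) (q^2) r * qPoch (-t) (q^2) (m+1-r) * qBinom (q^2) ((m:ℕ):ℤ) (r:ℤ))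
        - (1 - q * q ^ (2*m)) * (t * (t ^ (2*r) * qPoch (-(q/t)) (q^2) r * qPoch (-t) (q^2) (m-r) * qBinom (q^2) ((m:ℕ):ℤ) (r:ℤ))) := by
    intro r hr
    rw [mem_range] at hr
    obtain ⟨s, rfl⟩ : ∃ s, m = r + s := ⟨m - r, by omega⟩
    rw [show ((r+1:ℕ):ℤ) - 1 = ((r:ℕ):ℤ) by push_cast; ring,
      show r+s+1-(r+1) = s by omega,
      show r+s+1-r = s+1 by omega,
      show r+s-r = s by omega]
    rw [qPoch_succ, qPoch_succ]
    field_simp [t_ne_zero]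
    ring
  calc Se (m + 1)
      = ∑ r ∈ range (m + 2),
          (t ^ (2*r) * qPoch (-(q/t)) (q^2) r * qPoch (-t) (q^2) (m+1-r) * qBinom (q^2) ((m:ℕ):ℤ) (r:ℤ)
            + (q^2) ^ (m+1-r) * (t ^ (2*r) * qPoch (-(q/t)) (q^2) r * qPoch (-t) (q^2) (m+1-r) * qBinom (q^2) ((m:ℕ):ℤ) ((r:ℤ)-1))) :=
        Finset.sum_congr rfl key
    _ = (So m
          + ∑ r ∈ range (m + 1),
            (q^2) ^ (m+1-(r+1)) * (t ^ (2*(r+1)) * qPoch (-(q/t)) (q^2) (r+1) * qPoch (-t) (q^2) (m+1-(r+1)) * qBinom (q^2) ((m:ℕ):ℤ) (((r+1:ℕ):ℤ)-1))) := by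
        rw [Finset.sum_add_distrib]
        congr 1
        · rw [Finset.sum_range_succ
            (fun r => t ^ (2*r) * qPoch (-(q/t)) (q^2) r * qPoch (-t) (q^2) (m+1-r) * qBinom (q^2) ((m:ℕ):ℤ) (r:ℤ)) (m+1)]
          rw [qBinom_of_neg (q^2) ((m:ℕ):ℤ) ((m+1:ℕ):ℤ) (by push_cast; omega)]
          rw [So]
          ring
        · rw [Finset.sum_range_succ'
            (fun r => (q^2) ^ (m+1-r) * (t ^ (2*r) * qPoch (-(q/t)) (q^2) r * qPoch (-t) (q^2) (m+1-r) * qBinom (q^2) ((m:ℕ):ℤ) ((r:ℤ)-1)))]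
          rw [qBinom_of_neg (q^2) ((m:ℕ):ℤ) (((0:ℕ):ℤ)-1) (by omega)]
          simp only [Nat.cast_add, Nat.cast_one, mul_zero, add_zero]
    _ = (1 + t) * So m - (1 - q * q ^ (2*m)) * (t * Se m) := by
        rw [Finset.sum_congr rfl key2, Finset.sum_sub_distrib,
          ← Finset.mul_sum, ← Finset.mul_sum, ← Finset.mul_sum]
        rw [Se, So]
        ring

lemma both (m : ℕ) : rogersSzego (2*m) = Se m ∧ rogersSzego (2*m+1) = So m := by
  induction m with
  | zero =>
    exact ⟨rs0.trans Se0.symm, rs1.trans So0.symm⟩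
  | succ k ih =>
    obtain ⟨he, ho⟩ := ih
    have hE : rogersSzego (2*(k+1)) = Se (k+1) := by
      rw [show 2*(k+1) = 2*k+2 by ring, rs_rec (2*k), he, ho, ← step_even k]
    have hO : rogersSzego (2*(k+1)+1) = So (k+1) := by
      have : 2*(k+1)+1 = (2*k+1)+2 := by ring
      rw [this, rs_rec (2*k+1), show (2*k+1)+1 = 2*(k+1) by ring, hE, ho, ← step_odd k]
    exact ⟨hE, hO⟩

theorem stmt17 (n : ℕ) :
    rogersSzego n
    = ∑ r ∈ Finset.range (n / 2 + 1),
        t ^ (2 * r) * qPoch (-(q / t)) (q ^ 2) r *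
          qPoch (-t) (q ^ 2) ((n + 1) / 2 - r) *
          qBinom (q ^ 2) (n / 2 : ℤ) (r : ℤ) := by
  rcases Nat.even_or_odd n with ⟨m, hm⟩ | ⟨m, hm⟩
  · subst hm
    rw [show m + m = 2*m by ring]
    rw [show (2*m) / 2 = m by omega, show (2*m+1) / 2 = m by omega,
      show ((2*m : ℕ) : ℤ) / 2 = ((m:ℕ):ℤ) by omega]
    exact (both m).1
  · subst hm
    rw [show 2*m + 1 = 2*m+1 from rfl]
    rw [show (2*m+1) / 2 = m by omega, show (2*m+1+1) / 2 = m+1 by omega,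
      show ((2*m+1 : ℕ) : ℤ) / 2 = ((m:ℕ):ℤ) by omega]
    exact (both m).2


end Specific

end
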